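/- arXiv:1905.06293 — 2 statements merged into one kernel-verified Lean document; each statement's English description precedes it below -/
import Mathlib

section
/- Let k > 3 be an integer and let n₁, n₂, …, n_k be integers with each n_i ≥ 3. Then the complete k-partite graph K_{n₁,n₂,…,n_k} satisfies pid(K_{n₁,n₂,…,n_k}) = n₁ + n₂ + ⋯ + n_k, i.e., its perfect Italian domination number equals its order. -/
open scoped Classical

/-- `f : V → ℕ` is a perfect Italian dominating function of `G`:
labels are in `{0,1,2}` and every vertex labeled `0` has neighbor labels summing to exactly `2`. -/
def IsPIDFun {V : Type*} [Fintype V] (G : SimpleGraph V) (f : V → ℕ) : Prop :=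
  (∀ v, f v ≤ 2) ∧ ∀ v, f v = 0 → (∑ u, if G.Adj v u then f u else 0) = 2

/-- The perfect Italian domination number: minimum weight of a PID-function. -/
noncomputable def pid {V : Type*} [Fintype V] (G : SimpleGraph V) : ℕ :=
  sInf {w | ∃ f, IsPIDFun G f ∧ w = ∑ v, f v}

/-!
If a PID-function `f` of a complete multipartite graph labels some vertex `v` with `0`, the
neighbourhood of `v` is everything outside its part, so the parts other than that of `v` carry
weight exactly `2`. Each of them therefore weighs less than its size `≥ 3` and contains a `0`
vertex in turn; applied to those vertices, the same argument shows that all `k` parts carry the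
same weight `s`, so the weight of `f` is both `k s` and `s + 2`. This is impossible for `k ≥ 4`,
so `f` has no zero, and the constant function `1` is optimal.
-/

open Finset

lemma exists_eq_zero_of_sum_lt_card {α : Type*} [Fintype α] {g : α → ℕ}
    (h : ∑ a, g a < Fintype.card α) : ∃ a, g a = 0 := by
  by_contra! hg
  have : Fintype.card α ≤ ∑ a, g a := by
    simpa using card_nsmul_le_sum univ g 1 fun a _ => Nat.one_le_iff_ne_zero.mpr (hg a)
  omega

section pid

variable {V : Type*} [Fintype V]

lemma isPIDFun_one (G : SimpleGraph V) : IsPIDFun G 1 :=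
  ⟨fun _ => one_le_two, fun _ h => absurd h one_ne_zero⟩

lemma pid_le_card (G : SimpleGraph V) : pid G ≤ Fintype.card V :=
  Nat.sInf_le ⟨1, isPIDFun_one G, by simp⟩

lemma le_pid {G : SimpleGraph V} {m : ℕ} (h : ∀ f, IsPIDFun G f → m ≤ ∑ v, f v) : m ≤ pid G :=
  le_csInf ⟨_, 1, isPIDFun_one G, rfl⟩ fun _ ⟨f, hf, hw⟩ => hw ▸ h f hf

end pid

namespace SimpleGraph

variable {ι : Type*} {V : ι → Type*} [Fintype ι] [∀ i, Fintype (V i)]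

lemma sum_ite_completeMultipartiteGraph_adj {M : Type*} [AddCommMonoid M]
    [DecidableRel (completeMultipartiteGraph V).Adj] (f : (Σ i, V i) → M) (v : Σ i, V i) :
    (∑ u, if (completeMultipartiteGraph V).Adj v u then f u else 0) =
      ∑ j ∈ univ.erase v.1, ∑ a, f ⟨j, a⟩ := by
  rw [Fintype.sum_sigma, ← filter_ne, sum_filter]
  simp only [comap_adj, top_adj, sum_ite_irrel, sum_const_zero]

end SimpleGraph

open SimpleGraph

namespace IsPIDFun

variable {ι : Type*} {V : ι → Type*} [Fintype ι] [∀ i, Fintype (V i)]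

lemma sum_erase_eq_two {f : (Σ i, V i) → ℕ}
    (hf : IsPIDFun (completeMultipartiteGraph V) f) {v : Σ i, V i} (hv : f v = 0) :
    ∑ j ∈ univ.erase v.1, ∑ a, f ⟨j, a⟩ = 2 :=
  -- `convert` bridges the classical `Decidable` instance in `IsPIDFun` and the graph's own one.
  (sum_ite_completeMultipartiteGraph_adj f v).symm.trans (by convert hf.2 v hv)

lemma sum_eq_add_two {f : (Σ i, V i) → ℕ}
    (hf : IsPIDFun (completeMultipartiteGraph V) f) {v : Σ i, V i} (hv : f v = 0) :
    ∑ u, f u = ∑ a, f ⟨v.1, a⟩ + 2 := by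
  rw [Fintype.sum_sigma, ← sum_erase_add _ _ (mem_univ v.1), hf.sum_erase_eq_two hv, add_comm]

lemma card_le_sum (hι : 3 < Fintype.card ι) (hV : ∀ i, 3 ≤ Fintype.card (V i))
    {f : (Σ i, V i) → ℕ} (hf : IsPIDFun (completeMultipartiteGraph V) f) :
    Fintype.card (Σ i, V i) ≤ ∑ u, f u := by
  by_contra! hlt
  obtain ⟨v, hv⟩ := exists_eq_zero_of_sum_lt_card hlt
  set s := ∑ a, f ⟨v.1, a⟩
  have hpart : ∀ i, ∑ a, f ⟨i, a⟩ = s := by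
    intro i
    rcases eq_or_ne i v.1 with rfl | hi
    · rfl
    have hle : ∑ a, f ⟨i, a⟩ ≤ 2 := hf.sum_erase_eq_two hv ▸
      single_le_sum (f := fun j => ∑ a, f ⟨j, a⟩) (fun _ _ => Nat.zero_le _) (by simpa using hi)
    obtain ⟨a, ha⟩ := exists_eq_zero_of_sum_lt_card (hle.trans_lt (hV i))
    exact Nat.add_right_cancel ((hf.sum_eq_add_two ha).symm.trans (hf.sum_eq_add_two hv))
  have hsum : Fintype.card ι * s = s + 2 := by
    rw [← hf.sum_eq_add_two hv, Fintype.sum_sigma, sum_congr rfl fun i _ => hpart i, sum_const,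
      card_univ, smul_eq_mul]
  have hs : s = 0 := by
    have := hsum ▸ Nat.mul_le_mul_right s hι
    omega
  simp [hs] at hsum

end IsPIDFun

lemma pid_completeMultipartiteGraph {ι : Type*} {V : ι → Type*} [Fintype ι] [∀ i, Fintype (V i)]
    (hι : 3 < Fintype.card ι) (hV : ∀ i, 3 ≤ Fintype.card (V i)) :
    pid (completeMultipartiteGraph V) = Fintype.card (Σ i, V i) :=
  (pid_le_card _).antisymm (le_pid fun _ hf => hf.card_le_sum hι hV)

/-- For `k > 3` parts each of size at least `3`, the complete `k`-partite graph
`K_{n₁,…,n_k}` has perfect Italian domination number equal to its order. -/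
theorem pid_completeMultipartite (k : ℕ) (hk : 3 < k) (n : Fin k → ℕ) (h : ∀ i, 3 ≤ n i) :
    pid (SimpleGraph.completeMultipartiteGraph fun i => Fin (n i)) = ∑ i, n i := by
  rw [pid_completeMultipartiteGraph (by simpa using hk) (by simpa using h)]
  simp
end

section
/- Every cubic (3-regular) finite simple graph G on n vertices satisfies pid(G) ≤ n − 2·im(G), where im(G) is the strong matching number of G. -/
open scoped Classical

/-- `M` is a strong (induced) matching of `G`: a set of edges of `G` such that no two
distinct edges of `M` share an endpoint or have endpoints joined by an edge of `G`. -/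
def IsStrongMatching {V : Type*} [Fintype V] (G : SimpleGraph V) (M : Finset (Sym2 V)) : Prop :=
  (↑M ⊆ G.edgeSet) ∧
    ∀ e ∈ M, ∀ e' ∈ M, e ≠ e' → ∀ u ∈ e, ∀ v ∈ e', u ≠ v ∧ ¬ G.Adj u v

/-- The strong matching number `im G`: maximum size of a strong matching of `G`. -/
noncomputable def strongMatchingNumber {V : Type*} [Fintype V] (G : SimpleGraph V) : ℕ :=
  sSup {n | ∃ M : Finset (Sym2 V), IsStrongMatching G M ∧ M.card = n}

/-!
Take a maximum strong matching `M` and label the `2 * im G` vertices it covers with `0`, all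
others with `1`. A covered vertex `v` is adjacent to its partner in `M` and, since `M` is induced,
to no other covered vertex; so in a cubic graph exactly two neighbours of `v` carry the label `1`.
-/

open Finset

section

variable {V : Type*} [Fintype V] {G : SimpleGraph V}

theorem pid_le_sum_of_isPIDFun {f : V → ℕ} (hf : IsPIDFun G f) : pid G ≤ ∑ v, f v :=
  Nat.sInf_le ⟨f, hf, rfl⟩

variable (G) in
theorem exists_isStrongMatching_card_eq_strongMatchingNumber :
    ∃ M, IsStrongMatching G M ∧ #M = strongMatchingNumber G := by
  have hne : {n | ∃ M, IsStrongMatching G M ∧ #M = n}.Nonempty :=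
    ⟨0, ∅, ⟨by simp, by simp⟩, rfl⟩
  have hbdd : BddAbove {n | ∃ M, IsStrongMatching G M ∧ #M = n} :=
    ⟨Fintype.card (Sym2 V), by rintro _ ⟨M, -, rfl⟩; exact M.card_le_univ⟩
  exact Nat.sSup_mem hne hbdd

namespace IsStrongMatching

variable {M : Finset (Sym2 V)}

theorem card_biUnion_toFinset (hM : IsStrongMatching G M) :
    #(M.biUnion Sym2.toFinset) = 2 * #M := by
  have hdisj : (M : Set (Sym2 V)).PairwiseDisjoint Sym2.toFinset := by
    intro e he e' he' hne
    refine Finset.disjoint_left.2 fun x hx hx' => ?_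
    exact (hM.2 e he e' he' hne x (Sym2.mem_toFinset.1 hx) x (Sym2.mem_toFinset.1 hx')).1 rfl
  rw [card_biUnion hdisj, sum_congr rfl fun e he =>
    Sym2.card_toFinset_of_not_isDiag e (G.not_isDiag_of_mem_edgeSet (hM.1 he)),
    sum_const, smul_eq_mul, mul_comm]

theorem mem_biUnion_toFinset_iff_of_adj (hM : IsStrongMatching G M) {v w u : V}
    (hvw : s(v, w) ∈ M) (hvu : G.Adj v u) :
    u ∈ M.biUnion Sym2.toFinset ↔ u = w := by
  refine ⟨fun hu => ?_, fun huw => mem_biUnion.2 ⟨_, hvw, by simp [huw]⟩⟩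
  obtain ⟨e, he, hue⟩ := mem_biUnion.1 hu
  by_cases heq : e = s(v, w)
  · subst heq
    rcases Sym2.mem_iff.1 (Sym2.mem_toFinset.1 hue) with rfl | rfl
    · exact absurd hvu G.irrefl
    · rfl
  · exact absurd hvu (hM.2 _ hvw e he (Ne.symm heq) v (Sym2.mem_mk_left v w) u
      (Sym2.mem_toFinset.1 hue)).2

theorem isPIDFun_indicator (hM : IsStrongMatching G M)
    (hdeg : ∀ v ∈ M.biUnion Sym2.toFinset, G.degree v = 3) :
    IsPIDFun G fun v => if v ∈ M.biUnion Sym2.toFinset then 0 else 1 := by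
  refine ⟨fun v => by beta_reduce; split <;> omega, fun v hv => ?_⟩
  have hvS : v ∈ M.biUnion Sym2.toFinset := by
    by_contra h
    simp [h] at hv
  obtain ⟨e, he, hve⟩ := mem_biUnion.1 hvS
  obtain ⟨w, rfl⟩ := Sym2.mem_iff_exists.1 (Sym2.mem_toFinset.1 hve)
  have hvw : G.Adj v w := hM.1 he
  have hlabel : ∀ u, (if G.Adj v u then if u ∈ M.biUnion Sym2.toFinset then 0 else 1 else 0) =
      if u ∈ (G.neighborFinset v).erase w then 1 else 0 := by
    intro u
    by_cases hvu : G.Adj v u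
    · simp [hvu, hM.mem_biUnion_toFinset_iff_of_adj he hvu]
    · simp [hvu]
  rw [sum_congr rfl fun u _ => hlabel u, sum_boole, filter_mem_eq_inter, univ_inter,
    Nat.cast_id, card_erase_of_mem (by simpa using hvw), G.card_neighborFinset_eq_degree,
    hdeg v hvS]

theorem pid_le_card_sub_two_mul_card (hM : IsStrongMatching G M)
    (hdeg : ∀ v ∈ M.biUnion Sym2.toFinset, G.degree v = 3) :
    pid G ≤ Fintype.card V - 2 * #M := by
  calc pid G ≤ ∑ v, if v ∈ M.biUnion Sym2.toFinset then 0 else 1 :=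
        pid_le_sum_of_isPIDFun (hM.isPIDFun_indicator hdeg)
    _ = Fintype.card V - #(M.biUnion Sym2.toFinset) := by
        generalize M.biUnion Sym2.toFinset = S
        simp [sum_ite, filter_not, card_univ_sdiff]
    _ = Fintype.card V - 2 * #M := by rw [hM.card_biUnion_toFinset]

end IsStrongMatching

end

/-- Every cubic graph `G` on `n` vertices satisfies `pid G ≤ n - 2 * im G`. -/
theorem pid_le_card_sub_two_mul_strongMatchingNumber {V : Type*} [Fintype V]
    (G : SimpleGraph V) (hcubic : ∀ v, G.degree v = 3) :
    pid G ≤ Fintype.card V - 2 * strongMatchingNumber G := by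
  obtain ⟨M, hM, hcard⟩ := exists_isStrongMatching_card_eq_strongMatchingNumber G
  rw [← hcard]
  exact hM.pid_le_card_sub_two_mul_card fun v _ => hcubic v
end
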